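/- For the singular set Σ = {x = (x_1,…,x_N) ∈ (ℝ³)^N : ∏_j |x_j| · ∏_{i<j} |x_i − x_j| = 0}, the Euclidean distance from any point x ∈ (ℝ³)^N to Σ equals min{ |x_i|, (1/√2)|x_j − x_k| : i, j, k ∈ {1,…,N}, j ≠ k }. -/

import Mathlib

open Metric

/-- The singular set Σ ⊆ (ℝ³)^N : some particle at the origin or two particles coinciding. -/
def SigmaSet (N : ℕ) : Set (PiLp 2 (fun _ : Fin N => EuclideanSpace ℝ (Fin 3))) :=
  {x | (∃ j, x j = 0) ∨ (∃ i j, i ≠ j ∧ x i = x j)}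

private lemma eq_of_sq_eq {a b : ℝ} (ha : 0 ≤ a) (hb : 0 ≤ b) (h : a ^ 2 = b ^ 2) : a = b := by
  nlinarith [sq_nonneg (a - b), sq_nonneg (a + b)]

private lemma le_of_sq_le {a b : ℝ} (ha : 0 ≤ a) (hb : 0 ≤ b) (h : a ^ 2 ≤ b ^ 2) : a ≤ b := by
  nlinarith [sq_nonneg (a - b), sq_nonneg (a + b)]

private lemma aux_half {E : Type*} [NormedAddCommGroup E] [InnerProductSpace ℝ E] (a b : E) :
    ‖a - b‖ ^ 2 / 2 ≤ ‖a‖ ^ 2 + ‖b‖ ^ 2 := by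
  have h1 := norm_add_sq_real a b
  have h2 := norm_sub_sq_real a b
  nlinarith [sq_nonneg ‖a + b‖]

/-- The distance from `x ∈ (ℝ³)^N` (Euclidean norm) to the singular set `Σ` equals
`min { ‖x i‖, ‖x j - x k‖/√2 : j ≠ k }`. -/
theorem stmt0 (N : ℕ) (hN : 0 < N)
    (x : PiLp 2 (fun _ : Fin N => EuclideanSpace ℝ (Fin 3))) :
    Metric.infDist x (SigmaSet N) =
      sInf ({r : ℝ | (∃ i, r = ‖x i‖) ∨
        (∃ j k, j ≠ k ∧ r = ‖x j - x k‖ / Real.sqrt 2)}) := by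
  set S : Set ℝ := {r : ℝ | (∃ i, r = ‖x i‖) ∨
        (∃ j k, j ≠ k ∧ r = ‖x j - x k‖ / Real.sqrt 2)} with hS
  have i0 : Fin N := ⟨0, hN⟩
  have hSne : S.Nonempty := ⟨‖x i0‖, Or.inl ⟨i0, rfl⟩⟩
  have hSbdd : BddBelow S := by
    refine ⟨0, fun r hr => ?_⟩
    rcases hr with ⟨i, rfl⟩ | ⟨j, k, _, rfl⟩
    · positivity
    · positivity
  have hSigNe : (SigmaSet N).Nonempty := ⟨0, Or.inl ⟨i0, rfl⟩⟩
  apply le_antisymm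
  · -- infDist ≤ every candidate
    apply le_csInf hSne
    intro r hr
    rcases hr with ⟨i, rfl⟩ | ⟨j, k, hjk, rfl⟩
    · -- move particle i to the origin
      set y : PiLp 2 (fun _ : Fin N => EuclideanSpace ℝ (Fin 3)) := WithLp.toLp 2 (Function.update x i 0) with hy
      have hySig : y ∈ SigmaSet N := Or.inl ⟨i, by simp [hy]⟩
      refine le_trans (Metric.infDist_le_dist_of_mem hySig) (le_of_eq ?_)
      rw [PiLp.dist_eq_of_L2]
      have hsum : ∑ l, dist (x l) (y l) ^ 2 = ‖x i‖ ^ 2 := by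
        rw [Finset.sum_eq_single_of_mem i (Finset.mem_univ i)]
        · simp [hy]
        · intro l _ hl
          simp [hy, Function.update_of_ne hl]
      rw [hsum, Real.sqrt_sq (norm_nonneg _)]
    · -- move particles j and k to their midpoint
      set m : EuclideanSpace ℝ (Fin 3) := (2 : ℝ)⁻¹ • (x j + x k) with hm
      set y : PiLp 2 (fun _ : Fin N => EuclideanSpace ℝ (Fin 3)) :=
        WithLp.toLp 2 (Function.update (Function.update x j m) k m) with hy
      have hyj : y j = m := by simp [hy, Function.update_of_ne hjk]
      have hyk : y k = m := by simp [hy]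
      have hySig : y ∈ SigmaSet N := Or.inr ⟨j, k, hjk, by rw [hyj, hyk]⟩
      have hdj : x j - m = (2 : ℝ)⁻¹ • (x j - x k) := by rw [hm]; module
      have hdk : x k - m = -((2 : ℝ)⁻¹ • (x j - x k)) := by rw [hm]; module
      have hnj : dist (x j) m ^ 2 = ‖x j - x k‖ ^ 2 / 4 := by
        rw [dist_eq_norm, hdj, norm_smul]
        simp [mul_pow, abs_of_nonneg]
        ring
      have hnk : dist (x k) m ^ 2 = ‖x j - x k‖ ^ 2 / 4 := by
        rw [dist_eq_norm, hdk, norm_neg, norm_smul]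
        simp [mul_pow, abs_of_nonneg]
        ring
      refine le_trans (Metric.infDist_le_dist_of_mem hySig) (le_of_eq ?_)
      rw [PiLp.dist_eq_of_L2]
      have hsum : ∑ l, dist (x l) (y l) ^ 2 = ‖x j - x k‖ ^ 2 / 2 := by
        have hterm : ∀ l : Fin N, dist (x l) (y l) ^ 2 =
            (if l = j then ‖x j - x k‖ ^ 2 / 4 else 0) +
            (if l = k then ‖x j - x k‖ ^ 2 / 4 else 0) := by
          intro l
          by_cases hlj : l = j
          · subst hlj
            simp [hjk, hyj, hnj]
          · by_cases hlk : l = k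
            · subst hlk
              simp [hlj, hyk, hnk]
            · simp [hlj, hlk, hy, Function.update_of_ne hlk, Function.update_of_ne hlj]
        rw [Finset.sum_congr rfl (fun l _ => hterm l), Finset.sum_add_distrib]
        simp
        ring
      rw [hsum, Real.sqrt_div (sq_nonneg _), Real.sqrt_sq (norm_nonneg _)]
  · -- sInf ≤ dist to any point of Σ
    have key : ∀ y ∈ SigmaSet N, sInf S ≤ dist x y := ?_
    · rw [← not_lt]
      intro hlt
      obtain ⟨y, hy, hd⟩ := (Metric.infDist_lt_iff hSigNe).1 hlt
      exact absurd (key y hy) (not_le.2 hd)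
    intro y hy
    have hdist : dist x y = Real.sqrt (∑ l, dist (x l) (y l) ^ 2) := PiLp.dist_eq_of_L2 x y
    rcases hy with ⟨i, hyi⟩ | ⟨i, j, hij, hyij⟩
    · -- y i = 0
      have h1 : ‖x i‖ ≤ dist x y := by
        rw [hdist]
        have : dist (x i) (y i) ^ 2 ≤ ∑ l, dist (x l) (y l) ^ 2 :=
          Finset.single_le_sum (f := fun l => dist (x l) (y l) ^ 2)
            (fun l _ => sq_nonneg _) (Finset.mem_univ i)
        calc ‖x i‖ = Real.sqrt (dist (x i) (y i) ^ 2) := by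
              rw [hyi, dist_zero_right, Real.sqrt_sq (norm_nonneg _)]
          _ ≤ _ := Real.sqrt_le_sqrt this
      exact le_trans (csInf_le hSbdd (Or.inl ⟨i, rfl⟩)) h1
    · -- y i = y j
      have h2 : ‖x i - x j‖ / Real.sqrt 2 ≤ dist x y := by
        rw [hdist]
        have hpair : dist (x i) (y i) ^ 2 + dist (x j) (y j) ^ 2 ≤
            ∑ l, dist (x l) (y l) ^ 2 := by
          rw [← Finset.sum_pair (f := fun l => dist (x l) (y l) ^ 2) hij]
          exact Finset.sum_le_sum_of_subset_of_nonneg (Finset.subset_univ _)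
            (fun l _ _ => sq_nonneg _)
        have hhalf : ‖x i - x j‖ ^ 2 / 2 ≤ dist (x i) (y i) ^ 2 + dist (x j) (y j) ^ 2 := by
          rw [dist_eq_norm, dist_eq_norm, hyij]
          have := aux_half (x i - y j) (x j - y j)
          have heq : (x i - y j) - (x j - y j) = x i - x j := by abel
          rw [heq] at this
          exact this
        calc ‖x i - x j‖ / Real.sqrt 2 = Real.sqrt (‖x i - x j‖ ^ 2 / 2) := by
              rw [Real.sqrt_div (sq_nonneg _), Real.sqrt_sq (norm_nonneg _)]
          _ ≤ _ := Real.sqrt_le_sqrt (le_trans hhalf hpair)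
      exact le_trans (csInf_le hSbdd (Or.inr ⟨i, j, hij, rfl⟩)) h2
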